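/- arXiv:2111.14284 — 2 statements merged into one kernel-verified Lean document; each statement's English description precedes it below -/
import Mathlib

section
/- Let n ≥ 3, let G be a connected {K*_n, K_{1,n}, F^(1)_n, F^(2)_n}-free graph, let n₀ = max{⌈(n²−n−2)/2⌉, n}, let P = u_1 u_2 ⋯ u_m be a longest induced path of G, and define X₀ = {u_i : 1 ≤ i ≤ n₀ or m−n₀+1 ≤ i ≤ m}, Y = N_G(V(P) \ X₀) \ (X₀ ∪ N_G(X₀)), X₁ = N_G(X₀) \ V(P), and for i ≥ 2, X_i = N_G(X_{i−1}) \ (V(P) ∪ Y ∪ ⋃_{1 ≤ j ≤ i−2} X_j). Then V(G) is the disjoint union of V(P), Y, and X₁, …, X_{2n₀−1}; in particular X_i = ∅ for all i ≥ 2n₀. -/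
/-! ## Basic notions for graphs and digraphs

A digraph on a vertex type `V` is given by its arc relation `E : V → V → Prop`.
Simplicity and absence of 2-cycles is expressed by the hypothesis
`∀ u v, E u v → ¬ E v u`.  The underlying graph `G_D` is `SimpleGraph.fromRel E`. -/

/-- `G` contains an induced copy of the simple graph `H`. -/
def HasInducedCopyG {W V : Type} (H : SimpleGraph W) (G : SimpleGraph V) : Prop :=
  ∃ f : W → V, Function.Injective f ∧ ∀ a b : W, G.Adj (f a) (f b) ↔ H.Adj a b

/-- The digraph `E` contains an induced copy of the digraph `H`. -/
def DigraphHasInducedCopy {W V : Type} (H : W → W → Prop) (E : V → V → Prop) : Prop :=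
  ∃ f : W → V, Function.Injective f ∧ ∀ a b : W, E (f a) (f b) ↔ H a b

/-- The star `K_{1,n}` with one center and `n` leaves. -/
def StarG (n : ℕ) : SimpleGraph (Unit ⊕ Fin n) :=
  SimpleGraph.fromRel (fun a b =>
    match a, b with
    | Sum.inl _, Sum.inr _ => True
    | _, _ => False)

/-- The path `P_n` of order `n`. -/
def PathG (n : ℕ) : SimpleGraph (Fin n) :=
  SimpleGraph.fromRel (fun i j => i.val + 1 = j.val)

/-- The graph `K*_n`: a complete graph on the `x_i` together with pendant edges `x_i y_i`. -/
def KStarG (n : ℕ) : SimpleGraph (Fin n ⊕ Fin n) :=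
  SimpleGraph.fromRel (fun a b =>
    match a, b with
    | Sum.inl i, Sum.inl j => i ≠ j
    | Sum.inl i, Sum.inr j => i = j
    | _, _ => False)

/-- The graph `F^(1)_n` on `{x₁,x₂} ∪ {yᵢ} ∪ {zᵢ}`:
edges `x₁x₂, x₁y₁, x₁z₁` together with the two paths `y₁⋯y_n` and `z₁⋯z_n`. -/
def F1G (n : ℕ) : SimpleGraph (Fin 2 ⊕ Fin n ⊕ Fin n) :=
  SimpleGraph.fromRel (fun a b =>
    match a, b with
    | Sum.inl i, Sum.inl j => i.val = 0 ∧ j.val = 1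
    | Sum.inl i, Sum.inr (Sum.inl j) => i.val = 0 ∧ j.val = 0
    | Sum.inl i, Sum.inr (Sum.inr j) => i.val = 0 ∧ j.val = 0
    | Sum.inr (Sum.inl i), Sum.inr (Sum.inl j) => i.val + 1 = j.val
    | Sum.inr (Sum.inr i), Sum.inr (Sum.inr j) => i.val + 1 = j.val
    | _, _ => False)

/-- The single edge `y₁z₁` (used to build `F^(2)_n` and `F^(4)_n`). -/
def YZEdgeG (n : ℕ) : SimpleGraph (Fin 2 ⊕ Fin n ⊕ Fin n) :=
  SimpleGraph.fromRel (fun a b =>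
    match a, b with
    | Sum.inr (Sum.inl i), Sum.inr (Sum.inr j) => i.val = 0 ∧ j.val = 0
    | _, _ => False)

/-- `F^(2)_n = F^(1)_n + y₁z₁`. -/
def F2G (n : ℕ) : SimpleGraph (Fin 2 ⊕ Fin n ⊕ Fin n) := F1G n ⊔ YZEdgeG n

/-- The graph `F^(3)_n`: edges `x₁y₁, x₁z₁, x₂y₁, x₂z₁` together with the two paths. -/
def F3G (n : ℕ) : SimpleGraph (Fin 2 ⊕ Fin n ⊕ Fin n) :=
  SimpleGraph.fromRel (fun a b =>
    match a, b with
    | Sum.inl _, Sum.inr (Sum.inl j) => j.val = 0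
    | Sum.inl _, Sum.inr (Sum.inr j) => j.val = 0
    | Sum.inr (Sum.inl i), Sum.inr (Sum.inl j) => i.val + 1 = j.val
    | Sum.inr (Sum.inr i), Sum.inr (Sum.inr j) => i.val + 1 = j.val
    | _, _ => False)

/-- `F^(4)_n = F^(3)_n + y₁z₁`. -/
def F4G (n : ℕ) : SimpleGraph (Fin 2 ⊕ Fin n ⊕ Fin n) := F3G n ⊔ YZEdgeG n

/-- The digraph `D^(1)_n` on `{x₁} ∪ {yᵢ} ∪ {zᵢ}` with arcs
`(x₁,y₁), (z₁,x₁), (y₁,z₁)`, `(y_{i+1}, y_i)` and `(z_i, z_{i+1})`. -/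
def D1Rel (n : ℕ) : (Unit ⊕ Fin n ⊕ Fin n) → (Unit ⊕ Fin n ⊕ Fin n) → Prop := fun a b =>
  match a, b with
  | Sum.inl _, Sum.inr (Sum.inl j) => j.val = 0
  | Sum.inr (Sum.inr i), Sum.inl _ => i.val = 0
  | Sum.inr (Sum.inl i), Sum.inr (Sum.inr j) => i.val = 0 ∧ j.val = 0
  | Sum.inr (Sum.inl i), Sum.inr (Sum.inl j) => j.val + 1 = i.val
  | Sum.inr (Sum.inr i), Sum.inr (Sum.inr j) => i.val + 1 = j.val
  | _, _ => False

/-- `D^(2)_n`: obtained from `D^(1)_n` by replacing the arc `(z₁,x₁)` by `(x₁,z₁)`. -/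
def D2Rel (n : ℕ) : (Unit ⊕ Fin n ⊕ Fin n) → (Unit ⊕ Fin n ⊕ Fin n) → Prop := fun a b =>
  match a, b with
  | Sum.inl _, Sum.inr (Sum.inl j) => j.val = 0
  | Sum.inl _, Sum.inr (Sum.inr j) => j.val = 0
  | Sum.inr (Sum.inl i), Sum.inr (Sum.inr j) => i.val = 0 ∧ j.val = 0
  | Sum.inr (Sum.inl i), Sum.inr (Sum.inl j) => j.val + 1 = i.val
  | Sum.inr (Sum.inr i), Sum.inr (Sum.inr j) => i.val + 1 = j.val
  | _, _ => False

/-- `D^(3)_n`: obtained from `D^(1)_n` by replacing the arc `(x₁,y₁)` by `(y₁,x₁)`. -/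
def D3Rel (n : ℕ) : (Unit ⊕ Fin n ⊕ Fin n) → (Unit ⊕ Fin n ⊕ Fin n) → Prop := fun a b =>
  match a, b with
  | Sum.inr (Sum.inl i), Sum.inl _ => i.val = 0
  | Sum.inr (Sum.inr i), Sum.inl _ => i.val = 0
  | Sum.inr (Sum.inl i), Sum.inr (Sum.inr j) => i.val = 0 ∧ j.val = 0
  | Sum.inr (Sum.inl i), Sum.inr (Sum.inl j) => j.val + 1 = i.val
  | Sum.inr (Sum.inr i), Sum.inr (Sum.inr j) => i.val + 1 = j.val
  | _, _ => False

/-- The transitive tournament `T_n`. -/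
def TRel (n : ℕ) : Fin n → Fin n → Prop := fun i j => i < j

/-- A (nonempty) directed path in the digraph `E`, recorded as its list of vertices. -/
def IsDirPathList {V : Type} (E : V → V → Prop) (l : List V) : Prop :=
  l ≠ [] ∧ l.Nodup ∧ l.Chain' E

/-- The path cover number of the subdigraph of `E` induced by `X`:
the minimum number of directed paths of `E[X]` whose vertex sets cover `X`. -/
noncomputable def pcOn {V : Type} (E : V → V → Prop) (X : Set V) : ℕ :=
  sInf {k | ∃ P : Finset (List V), P.card = k ∧
    (∀ l ∈ P, IsDirPathList E l ∧ ∀ v ∈ l, v ∈ X) ∧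
    ∀ v ∈ X, ∃ l ∈ P, v ∈ l}

/-- The path partition number of the subdigraph of `E` induced by `X`:
the minimum number of pairwise vertex-disjoint directed paths of `E[X]`
whose vertex sets partition `X`. -/
noncomputable def ppOn {V : Type} (E : V → V → Prop) (X : Set V) : ℕ :=
  sInf {k | ∃ P : Finset (List V), P.card = k ∧
    (∀ l ∈ P, IsDirPathList E l ∧ ∀ v ∈ l, v ∈ X) ∧
    (∀ v ∈ X, ∃ l ∈ P, v ∈ l) ∧
    ∀ l ∈ P, ∀ l' ∈ P, l ≠ l' → ∀ v ∈ l, v ∉ l'}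

/-- A (nonempty) path in the simple graph `G`, recorded as its list of vertices. -/
def IsPathList {V : Type} (G : SimpleGraph V) (l : List V) : Prop :=
  l ≠ [] ∧ l.Nodup ∧ l.Chain' G.Adj

/-- The path cover number `pc(G)` of a simple graph `G`. -/
noncomputable def pcG {V : Type} (G : SimpleGraph V) : ℕ :=
  sInf {k | ∃ P : Finset (List V), P.card = k ∧
    (∀ l ∈ P, IsPathList G l) ∧ ∀ v : V, ∃ l ∈ P, v ∈ l}

/-- The path partition number `pp(G)` of a simple graph `G`. -/
noncomputable def ppG {V : Type} (G : SimpleGraph V) : ℕ :=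
  sInf {k | ∃ P : Finset (List V), P.card = k ∧
    (∀ l ∈ P, IsPathList G l) ∧ (∀ v : V, ∃ l ∈ P, v ∈ l) ∧
    ∀ l ∈ P, ∀ l' ∈ P, l ≠ l' → ∀ v ∈ l, v ∉ l'}

/-- A directed cycle in the digraph `E`, recorded as its list of vertices. -/
def IsDirCycleList {V : Type} (E : V → V → Prop) (l : List V) : Prop :=
  ∃ h : l ≠ [], 3 ≤ l.length ∧ l.Nodup ∧ l.Chain' E ∧ E (l.getLast h) (l.head h)

/-- A member of a cycle cover/partition: a directed cycle, or a weakly connected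
subdigraph of order at most two. -/
def IsCyclePartMember {V : Type} (E : V → V → Prop) (l : List V) : Prop :=
  IsDirCycleList E l ∨
    (l ≠ [] ∧ l.length ≤ 2 ∧ l.Nodup ∧ l.Chain' (fun a b => E a b ∨ E b a))

/-- The cycle partition number `cp(D)` of the digraph `E`. -/
noncomputable def cpNum {V : Type} (E : V → V → Prop) : ℕ :=
  sInf {k | ∃ P : Finset (List V), P.card = k ∧
    (∀ l ∈ P, IsCyclePartMember E l) ∧
    (∀ v : V, ∃ l ∈ P, v ∈ l) ∧
    ∀ l ∈ P, ∀ l' ∈ P, l ≠ l' → ∀ v ∈ l, v ∉ l'}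

/-- `v : Fin m → V` enumerates an induced path of the simple graph `G`. -/
def IsInducedPathEmb {V : Type} (G : SimpleGraph V) {m : ℕ} (v : Fin m → V) : Prop :=
  Function.Injective v ∧
    ∀ i j : Fin m, G.Adj (v i) (v j) ↔ (i.val + 1 = j.val ∨ j.val + 1 = i.val)

/-- `w : Fin m → V` enumerates an induced pseudo-path of the digraph `E`:
the induced subdigraph on its image has a path as underlying graph. -/
def IsInducedPsPath {V : Type} (E : V → V → Prop) {m : ℕ} (w : Fin m → V) : Prop :=
  Function.Injective w ∧
    ∀ i j : Fin m, (E (w i) (w j) ∨ E (w j) (w i)) ↔ (i.val + 1 = j.val ∨ j.val + 1 = i.val)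

/-- `r(P)` for a pseudo-path enumerated by `w`: the number of (internal) vertices
having out-degree 2 or in-degree 2 in the pseudo-path. -/
noncomputable def turnCount {V : Type} (E : V → V → Prop) {m : ℕ} (w : Fin m → V) : ℕ :=
  Set.ncard {i : Fin m | ∃ j k : Fin m, j.val + 1 = i.val ∧ i.val + 1 = k.val ∧
    ((E (w i) (w j) ∧ E (w i) (w k)) ∨ (E (w j) (w i) ∧ E (w k) (w i)))}

/-- Condition (D1): the underlying graph of `E` is `{K*_n, K_{1,n}, F^(1)_n, F^(2)_n}`-free. -/
def CondD1 {V : Type} (n : ℕ) (E : V → V → Prop) : Prop :=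
  ¬ HasInducedCopyG (KStarG n) (SimpleGraph.fromRel E) ∧
  ¬ HasInducedCopyG (StarG n) (SimpleGraph.fromRel E) ∧
  ¬ HasInducedCopyG (F1G n) (SimpleGraph.fromRel E) ∧
  ¬ HasInducedCopyG (F2G n) (SimpleGraph.fromRel E)

/-- Condition (D'1): the underlying graph of `E` is
`{K*_n, K_{1,n}, F^(1)_n, F^(2)_n, F^(3)_n, F^(4)_n}`-free. -/
def CondD1' {V : Type} (n : ℕ) (E : V → V → Prop) : Prop :=
  CondD1 n E ∧
  ¬ HasInducedCopyG (F3G n) (SimpleGraph.fromRel E) ∧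
  ¬ HasInducedCopyG (F4G n) (SimpleGraph.fromRel E)

/-- Condition (D2): `E` is `{D^(1)_n, D^(2)_n, D^(3)_n}`-free. -/
def CondD2 {V : Type} (n : ℕ) (E : V → V → Prop) : Prop :=
  ¬ DigraphHasInducedCopy (D1Rel n) E ∧
  ¬ DigraphHasInducedCopy (D2Rel n) E ∧
  ¬ DigraphHasInducedCopy (D3Rel n) E

/-- Condition (D3): `r(P) ≤ n` for every induced pseudo-path `P` of `E`. -/
def CondD3 {V : Type} (n : ℕ) (E : V → V → Prop) : Prop :=
  ∀ (m : ℕ) (w : Fin m → V), IsInducedPsPath E w → turnCount E w ≤ n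

/-- The Ramsey number `R(a, b)`: the least `R` such that every graph on at least `R`
vertices contains a clique of size `a` or an independent set of size `b`. -/
noncomputable def ramseyNumber (a b : ℕ) : ℕ :=
  sInf {R | ∀ m : ℕ, R ≤ m → ∀ G : SimpleGraph (Fin m),
    (∃ s : Finset (Fin m), G.IsNClique a s) ∨ (∃ s : Finset (Fin m), Gᶜ.IsNClique b s)}

/-- The independence number of the subgraph of `G` induced by `X`. -/
noncomputable def indepNumOn {V : Type} (G : SimpleGraph V) (X : Set V) : ℕ :=
  sSup {k | ∃ s : Finset V, ↑s ⊆ X ∧ s.card = k ∧ ∀ a ∈ s, ∀ b ∈ s, a ≠ b → ¬ G.Adj a b}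

/-- The independence number `α(G)`. -/
noncomputable def indepNum {V : Type} (G : SimpleGraph V) : ℕ := indepNumOn G Set.univ

/-- The neighborhood `N_G(X)` of a set of vertices. -/
def nbhd {V : Type} (G : SimpleGraph V) (X : Set V) : Set V :=
  {v | v ∉ X ∧ ∃ x ∈ X, G.Adj v x}

/-!
Write `P = u 0 ⋯ u (m - 1)`. Let `v ∉ P` have a neighbour `q` that sees nothing of `P`. If
all neighbours of `v` on `P` lay at distance at least `n` from both ends, the two stretches
of `P` leaving their span would be the legs of a spider with centre `v` and pendant `q`
(or, for a single neighbour `u a`, with centre `u a` and pendant `v`), an induced `F^(1)_n`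
or `F^(2)_n`. Applied to `v ∈ Y`, this shows that `P ∪ Y ∪ X₁` absorbs all neighbours of
`P ∪ Y`.

A vertex of `X (2 n₀)` ends an induced path `c 0 ∈ X 1, …, c (2 n₀ - 1)` hanging from `P` at
`c 0` only. Since `P` is longest, the last neighbour of `c 0` on `P` has index at least
`2 n₀`, and the first one is at least `2 n₀` away from the end; so they are not one or two
adjacent vertices, by the above with `q = c 1`. Spiders with the leg `c 1, c 2, …` then put
the first neighbour among `u 0, …, u (n - 2)` and leave no gap of more than `n` between
neighbours, so descending from the last neighbour in steps of `2` to `n` yields `n - 1`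
pairwise nonadjacent neighbours of `c 0`; with `c 1` they form an induced `K_{1,n}` centred
at `c 0`. Hence `X (2 n₀) = ∅`, and connectivity gives the covering.
-/

section InducedPathSeq

variable {V : Type} {G : SimpleGraph V}

/-- `IsInducedPathEmb` for `w 0, …, w (k - 1)`, indexed by `ℕ` so that paths can be
reversed, shifted and glued without `Fin` casts. -/
def IsInducedPathSeq (G : SimpleGraph V) (k : ℕ) (w : ℕ → V) : Prop :=
  (∀ i < k, ∀ j < k, w i = w j → i = j) ∧
    ∀ i < k, ∀ j < k, (G.Adj (w i) (w j) ↔ i + 1 = j ∨ j + 1 = i)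

theorem isInducedPathEmb_iff {k : ℕ} {w : ℕ → V} :
    IsInducedPathEmb G (fun i : Fin k => w i) ↔ IsInducedPathSeq G k w := by
  refine ⟨fun ⟨hinj, hadj⟩ => ⟨fun i hi j hj h => ?_, fun i hi j hj => hadj ⟨i, hi⟩ ⟨j, hj⟩⟩,
    fun ⟨hinj, hadj⟩ => ⟨fun i j h => Fin.ext (hinj i i.2 j j.2 h), fun i j => hadj i i.2 j j.2⟩⟩
  exact congrArg Fin.val (@hinj ⟨i, hi⟩ ⟨j, hj⟩ h)

theorem IsInducedPathEmb.exists_isInducedPathSeq [Nonempty V] {m : ℕ} {u : Fin m → V}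
    (hu : IsInducedPathEmb G u) :
    ∃ U : ℕ → V, IsInducedPathSeq G m U ∧ (fun i : Fin m => U i) = u := by
  refine ⟨fun t => if h : t < m then u ⟨t, h⟩ else Classical.arbitrary V, ?_,
    funext fun i => dif_pos i.2⟩
  rw [← isInducedPathEmb_iff]
  convert hu using 1
  exact funext fun i => dif_pos i.2

theorem range_fin_eq_image_Iio {m : ℕ} (U : ℕ → V) :
    Set.range (fun i : Fin m => U i) = U '' Set.Iio m := by
  rw [← Fin.range_val, ← Set.range_comp]
  rfl

theorem isInducedPathSeq_one (v : V) : IsInducedPathSeq G 1 (fun _ => v) :=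
  ⟨fun i hi j hj _ => by omega, fun i hi j hj => iff_of_false G.irrefl (by omega)⟩

namespace IsInducedPathSeq

variable {k : ℕ} {w : ℕ → V}

theorem ne (h : IsInducedPathSeq G k w) {i j : ℕ} (hi : i < k) (hj : j < k) (hij : i ≠ j) :
    w i ≠ w j :=
  fun e => hij (h.1 i hi j hj e)

theorem not_adj (h : IsInducedPathSeq G k w) {i j : ℕ} (hi : i < k) (hj : j < k)
    (hij : i + 2 ≤ j ∨ j + 2 ≤ i) : ¬ G.Adj (w i) (w j) := by
  rw [h.2 i hi j hj]
  omega

theorem comp_add (h : IsInducedPathSeq G k w) {a l : ℕ} (hl : a + l ≤ k) :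
    IsInducedPathSeq G l (fun i => w (a + i)) :=
  ⟨fun i hi j hj e => by have := h.1 _ (by omega) _ (by omega) e; omega,
    fun i hi j hj => by rw [h.2 _ (by omega) _ (by omega)]; omega⟩

theorem comp_sub (h : IsInducedPathSeq G k w) {a l : ℕ} (ha : a < k) (hl : l ≤ a + 1) :
    IsInducedPathSeq G l (fun i => w (a - i)) :=
  ⟨fun i hi j hj e => by have := h.1 _ (by omega) _ (by omega) e; omega,
    fun i hi j hj => by rw [h.2 _ (by omega) _ (by omega)]; omega⟩

theorem append (h : IsInducedPathSeq G k w) {l : ℕ} {w' : ℕ → V}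
    (h' : IsInducedPathSeq G l w')
    (hcross : ∀ i < k, ∀ j < l, w i ≠ w' j ∧ (G.Adj (w i) (w' j) ↔ i + 1 = k ∧ j = 0)) :
    IsInducedPathSeq G (k + l) (fun t => if t < k then w t else w' (t - k)) := by
  constructor
  · intro s hs t ht e
    dsimp only at e
    split_ifs at e with h1 h2 h2
    · exact h.1 s h1 t h2 e
    · exact absurd e (hcross s h1 _ (by omega)).1
    · exact absurd e.symm (hcross t h2 _ (by omega)).1
    · have := h'.1 _ (by omega) _ (by omega) e
      omega
  · intro s hs t ht
    dsimp only
    split_ifs with h1 h2 h2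
    · exact h.2 s h1 t h2
    · rw [(hcross s h1 _ (by omega)).2]
      omega
    · rw [G.adj_comm, (hcross t h2 _ (by omega)).2]
      omega
    · rw [h'.2 _ (by omega) _ (by omega)]
      omega

end IsInducedPathSeq

end InducedPathSeq

section ForbiddenSubgraphs

variable {V : Type} {G : SimpleGraph V} {n : ℕ}

theorem hasInducedCopyG_starG {p : V} {T : Finset V} (hT : G.IsNIndepSet n T)
    (hp : ∀ v ∈ T, G.Adj p v) : HasInducedCopyG (StarG n) G := by
  set e := T.equivFinOfCardEq hT.card_eq
  have hpe (i : Fin n) : G.Adj p (e.symm i) := hp _ (e.symm i).2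
  have hee (i j : Fin n) : ¬ G.Adj (e.symm i) (e.symm j) := fun h =>
    hT.isIndepSet (e.symm i).2 (e.symm j).2 h.ne h
  refine ⟨Sum.elim (fun _ => p) (fun i => e.symm i), ?_, ?_⟩
  · rintro (_ | i) (_ | j) h
    · rfl
    · exact absurd h (hpe j).ne
    · exact absurd h.symm (hpe i).ne
    · exact congrArg Sum.inr (e.symm.injective (Subtype.ext h))
  · rintro (_ | i) (_ | j) <;> simp [StarG, hee, hpe, (hpe _).symm]

/-- `F^(1)_n` is the spider with centre `x₁`, pendant vertex `x₂` and legs `y`, `z`;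
`F^(2)_n` adds the edge between the feet `y₁`, `z₁`, which is present here iff `e`. -/
theorem hasInducedCopyG_spider (e : Prop) [Decidable e] {x q : V} {y z : ℕ → V}
    (hy : IsInducedPathSeq G n y) (hz : IsInducedPathSeq G n z)
    (hyz : ∀ i < n, ∀ j < n, y i ≠ z j ∧ (G.Adj (y i) (z j) ↔ e ∧ i = 0 ∧ j = 0))
    (hxq : G.Adj x q)
    (hxy : ∀ i < n, x ≠ y i ∧ (G.Adj x (y i) ↔ i = 0))
    (hxz : ∀ i < n, x ≠ z i ∧ (G.Adj x (z i) ↔ i = 0))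
    (hqy : ∀ i < n, q ≠ y i ∧ ¬ G.Adj q (y i))
    (hqz : ∀ i < n, q ≠ z i ∧ ¬ G.Adj q (z i)) :
    HasInducedCopyG (if e then F2G n else F1G n) G := by
  refine ⟨Sum.elim ![x, q] (Sum.elim (fun i => y i) (fun i => z i)), ?_, ?_⟩
  · rintro (i | i | i) (j | j | j) h
    all_goals (try fin_cases i) <;> (try fin_cases j)
    all_goals first
      | rfl
      | exact absurd h hxq.ne | exact absurd h hxq.ne'
      | exact absurd h (hxy _ j.2).1 | exact absurd h.symm (hxy _ i.2).1
      | exact absurd h (hxz _ j.2).1 | exact absurd h.symm (hxz _ i.2).1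
      | exact absurd h (hqy _ j.2).1 | exact absurd h.symm (hqy _ i.2).1
      | exact absurd h (hqz _ j.2).1 | exact absurd h.symm (hqz _ i.2).1
      | exact absurd h (hyz _ i.2 _ j.2).1 | exact absurd h.symm (hyz _ j.2 _ i.2).1
      | exact congrArg _ (congrArg _ (Fin.ext (hy.1 _ i.2 _ j.2 h)))
      | exact congrArg _ (congrArg _ (Fin.ext (hz.1 _ i.2 _ j.2 h)))
  · have hyy (i j : Fin n) : G.Adj (y i) (y j) ↔ ¬ i = j ∧ (i.val + 1 = j ∨ j.val + 1 = i) := by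
      rw [hy.2 i i.2 j j.2, Fin.ext_iff]
      omega
    have hzz (i j : Fin n) : G.Adj (z i) (z j) ↔ ¬ i = j ∧ (i.val + 1 = j ∨ j.val + 1 = i) := by
      rw [hz.2 i i.2 j j.2, Fin.ext_iff]
      omega
    have hyz' (i j : Fin n) := (hyz i i.2 j j.2).2
    have hxy' (i : Fin n) := (hxy i i.2).2
    have hxz' (i : Fin n) := (hxz i i.2).2
    have hqy' (i : Fin n) := (hqy i i.2).2
    have hqz' (i : Fin n) := (hqz i i.2).2
    rintro (i | i | i) (j | j | j)
    all_goals (try fin_cases i) <;> (try fin_cases j)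
    all_goals split_ifs with he
    all_goals simp [F1G, F2G, YZEdgeG, hyy, hzz, hyz', hxy', hxz', hqy', hqz', hxq, hxq.symm, he,
      G.adj_comm (y _) x, G.adj_comm (z _) x, G.adj_comm (y _) q, G.adj_comm (z _) q,
      G.adj_comm (z _) (y _)]

theorem hasInducedCopyG_F1G_of_spider {x q : V} {y z : ℕ → V}
    (hy : IsInducedPathSeq G n y) (hz : IsInducedPathSeq G n z)
    (hyz : ∀ i < n, ∀ j < n, y i ≠ z j ∧ ¬ G.Adj (y i) (z j))
    (hxq : G.Adj x q)
    (hxy : ∀ i < n, x ≠ y i ∧ (G.Adj x (y i) ↔ i = 0))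
    (hxz : ∀ i < n, x ≠ z i ∧ (G.Adj x (z i) ↔ i = 0))
    (hqy : ∀ i < n, q ≠ y i ∧ ¬ G.Adj q (y i))
    (hqz : ∀ i < n, q ≠ z i ∧ ¬ G.Adj q (z i)) :
    HasInducedCopyG (F1G n) G := by
  simpa using hasInducedCopyG_spider False hy hz (fun i hi j hj => by simpa using hyz i hi j hj)
    hxq hxy hxz hqy hqz

end ForbiddenSubgraphs

theorem exists_separated_subset_of_gaps {A : Set ℕ} {a n : ℕ}
    (hgap : ∀ t ∈ A, a + 2 ≤ t → ∃ s ∈ A, s + 2 ≤ t ∧ t ≤ s + n) :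
    ∀ t ∈ A, ∃ S : Finset ℕ, ↑S ⊆ A ∧ (∀ s ∈ S, s ≤ t) ∧
      (S : Set ℕ).Pairwise (fun s r => s + 2 ≤ r ∨ r + 2 ≤ s) ∧ t + n ≤ n * S.card + a + 1 := by
  intro t
  induction t using Nat.strong_induction_on with
  | _ t ih =>
    intro htA
    by_cases hta : t ≤ a + 1
    · refine ⟨{t}, by simpa using htA, by simp, by simp, ?_⟩
      simp only [Finset.card_singleton, mul_one]
      omega
    obtain ⟨s, hsA, hst, hts⟩ := hgap t htA (by omega)
    obtain ⟨S, hSA, hSs, hsep, hcard⟩ := ih s (by omega) hsA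
    have htS : t ∉ S := fun h => by have := hSs t h; omega
    refine ⟨insert t S, ?_, fun r hr => ?_, ?_, ?_⟩
    · simpa [Set.insert_subset_iff] using ⟨htA, hSA⟩
    · rcases Finset.mem_insert.1 hr with rfl | hr
      · exact le_rfl
      · have := hSs r hr
        omega
    · rw [Finset.coe_insert]
      refine hsep.insert fun r hr _ => ?_
      have := hSs r hr
      omega
    · rw [Finset.card_insert_of_notMem htS, Nat.mul_succ]
      omega

theorem mul_sub_two_le (n : ℕ) : n * (n - 2) ≤ 2 * ((n ^ 2 - n - 1) / 2) := by
  rcases Nat.lt_or_ge n 2 with hn | hn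
  · interval_cases n <;> simp
  obtain ⟨k, rfl⟩ : ∃ k, n = k + 2 := ⟨n - 2, by omega⟩
  have : (k + 2) ^ 2 = (k + 2) * k + 2 * (k + 2) := by ring
  rw [Nat.add_sub_cancel]
  omega

section LongestInducedPath

variable {V : Type} {G : SimpleGraph V} {n m : ℕ} {u : ℕ → V}

theorem exists_extreme_adj {v : V} (h : ∃ t < m, G.Adj v (u t)) :
    ∃ a < m, G.Adj v (u a) ∧ ∃ b < m, G.Adj v (u b) ∧
      ∀ t < m, G.Adj v (u t) → a ≤ t ∧ t ≤ b := by
  classical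
  have ha := Nat.find_spec h
  have hb := Nat.findGreatest_spec (P := fun t => t < m ∧ G.Adj v (u t)) ha.1.le ha
  exact ⟨_, ha.1, ha.2, _, hb.1, hb.2, fun t ht hvt =>
    ⟨Nat.find_min' h ⟨ht, hvt⟩, Nat.le_findGreatest ht.le ⟨ht, hvt⟩⟩⟩

theorem exists_adj_near_end (hF1 : ¬ HasInducedCopyG (F1G n) G)
    (hF2 : ¬ HasInducedCopyG (F2G n) G) (hu : IsInducedPathSeq G m u) {v q : V}
    (hv : ∀ t < m, v ≠ u t) (hq : ∀ t < m, q ≠ u t ∧ ¬ G.Adj q (u t)) (hvq : G.Adj v q)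
    {t₀ : ℕ} (ht₀ : t₀ < m) (hvt₀ : G.Adj v (u t₀)) :
    ∃ s < m, G.Adj v (u s) ∧ (s < n ∨ m ≤ s + n) := by
  obtain ⟨a, ham, hva, b, hbm, hvb, hab⟩ := exists_extreme_adj ⟨t₀, ht₀, hvt₀⟩
  by_contra! hmid
  have ha := hmid a ham hva
  have hb := hmid b hbm hvb
  rcases Nat.lt_or_ge a b with hlt | hge
  · -- centre `v`, legs running away from `u a` and `u b`, feet adjacent iff `b = a + 1`
    have := hasInducedCopyG_spider (G := G) (n := n) (b = a + 1) (x := v) (q := q)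
      (y := fun i => u (a - i)) (z := fun i => u (b + i)) (hu.comp_sub ham (by omega))
      (hu.comp_add (by omega))
      (fun i _ j _ => ⟨hu.ne (by omega) (by omega) (by omega),
        by rw [hu.2 _ (by omega) _ (by omega)]; omega⟩) hvq
      (fun i _ => ⟨hv _ (by omega), fun h => by have := hab _ (by omega) h; omega,
        by rintro rfl; simpa using hva⟩)
      (fun i _ => ⟨hv _ (by omega), fun h => by have := hab _ (by omega) h; omega,
        by rintro rfl; simpa using hvb⟩)
      (fun i _ => hq _ (by omega)) (fun i _ => hq _ (by omega))
    split_ifs at this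
    exacts [hF2 this, hF1 this]
  · -- `u a` is the only neighbour of `v` on `u`: centre `u a`, pendant `v`
    exact hF1 <| hasInducedCopyG_F1G_of_spider (x := u a) (q := v)
      (y := fun i => u (a - 1 - i)) (z := fun i => u (a + 1 + i))
      (hu.comp_sub (by omega) (by omega)) (hu.comp_add (by omega))
      (fun i _ j _ => ⟨hu.ne (by omega) (by omega) (by omega), hu.not_adj (by omega) (by omega)
        (by omega)⟩) hva.symm
      (fun i _ => ⟨hu.ne (by omega) (by omega) (by omega),
        by rw [hu.2 _ (by omega) _ (by omega)]; omega⟩)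
      (fun i _ => ⟨hu.ne (by omega) (by omega) (by omega),
        by rw [hu.2 _ (by omega) _ (by omega)]; omega⟩)
      (fun i _ => ⟨hv _ (by omega), fun h => by have := hab _ (by omega) h; omega⟩)
      (fun i _ => ⟨hv _ (by omega), fun h => by have := hab _ (by omega) h; omega⟩)

theorem hasInducedCopyG_starG_of_separated (hu : IsInducedPathSeq G m u) (hn : 0 < n)
    {v w : V} {S : Finset ℕ} (hS : ∀ s ∈ S, s < m ∧ G.Adj v (u s))
    (hsep : (S : Set ℕ).Pairwise (fun s r => s + 2 ≤ r ∨ r + 2 ≤ s))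
    (hw : ∀ t < m, w ≠ u t ∧ ¬ G.Adj w (u t)) (hvw : G.Adj v w) (hcard : n ≤ S.card + 1) :
    HasInducedCopyG (StarG n) G := by
  classical
  obtain ⟨S', hS'S, hS'card⟩ := Finset.exists_subset_card_eq (show n - 1 ≤ S.card by omega)
  have hS' : ∀ s ∈ S', s < m ∧ G.Adj v (u s) := fun s hs => hS s (hS'S hs)
  have hwS' : w ∉ S'.image u := by
    simp only [Finset.mem_image, not_exists, not_and]
    exact fun s hs h => (hw s (hS' s hs).1).1 h.symm
  refine hasInducedCopyG_starG (p := v) (T := insert w (S'.image u)) ⟨?_, ?_⟩ ?_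
  · rw [Finset.coe_insert, Finset.coe_image]
    refine Set.Pairwise.insert ?_ fun x hx _ => ?_
    · rintro _ ⟨s, hs, rfl⟩ _ ⟨r, hr, rfl⟩ hsr
      exact hu.not_adj (hS' s hs).1 (hS' r hr).1
        (hsep (hS'S hs) (hS'S hr) fun h => hsr (congrArg u h))
    · obtain ⟨s, hs, rfl⟩ := hx
      exact ⟨(hw s (hS' s hs).1).2, fun h => (hw s (hS' s hs).1).2 h.symm⟩
  · rw [Finset.card_insert_of_notMem hwS', Finset.card_image_of_injOn
      fun s hs r hr h => hu.1 s (hS' s hs).1 r (hS' r hr).1 h]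
    omega
  · simp only [Finset.mem_insert, Finset.mem_image]
    rintro _ (rfl | ⟨s, hs, rfl⟩)
    exacts [hvw, (hS' s hs).2]

def IsPendantPath (G : SimpleGraph V) (m : ℕ) (u : ℕ → V) (N : ℕ) (c : ℕ → V) : Prop :=
  IsInducedPathSeq G N c ∧ (∀ i < N, ∀ t < m, c i ≠ u t) ∧
    ∀ i < N, 0 < i → ∀ t < m, ¬ G.Adj (c i) (u t)

namespace IsPendantPath

variable {N : ℕ} {c : ℕ → V}

theorem reverse (hc : IsPendantPath G m u N c) :
    IsPendantPath G m (fun t => u (m - 1 - t)) N c :=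
  ⟨hc.1, fun i hi t _ => hc.2.1 i hi _ (by omega),
    fun i hi hi0 t _ => hc.2.2 i hi hi0 _ (by omega)⟩

/-- `c (N - 1), …, c 0, u b, …, u (m - 1)` is an induced path of length `N + (m - b)`. -/
theorem le_of_isLongest (hc : IsPendantPath G m u N c) (hu : IsInducedPathSeq G m u)
    (hlong : ∀ k w, IsInducedPathSeq G k w → k ≤ m) {b : ℕ} (hb : b < m)
    (hcb : G.Adj (c 0) (u b)) (hmax : ∀ t < m, G.Adj (c 0) (u t) → t ≤ b) : N ≤ b := by
  rcases Nat.eq_zero_or_pos N with rfl | hN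
  · exact Nat.zero_le b
  have hglued := (hc.1.comp_sub (a := N - 1) (l := N) (by omega) (by omega)).append
    (hu.comp_add (a := b) (l := m - b) (by omega)) fun i hi j hj => by
      refine ⟨hc.2.1 _ (by omega) _ (by omega), ?_⟩
      by_cases hi' : i + 1 = N
      · rw [show N - 1 - i = 0 by omega]
        exact ⟨fun h => ⟨hi', by have := hmax _ (by omega) h; omega⟩,
          fun ⟨_, hj0⟩ => by simpa [hj0] using hcb⟩
      · exact iff_of_false (hc.2.2 _ (by omega) (by omega) _ (by omega)) (by omega)
  have := hlong _ _ hglued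
  omega

/-- The spider: centre `c 0`, legs `c 1, c 2, …` and `u r, u (r - 1), …`, pendant `u s`. -/
theorem hasInducedCopyG_F1G (hc : IsPendantPath G m u N c) (hu : IsInducedPathSeq G m u)
    (hN : n < N) {r s : ℕ} (hr : r < m) (hnr : n ≤ r + 1)
    (hcr : G.Adj (c 0) (u r)) (hleg : ∀ i < n, 0 < i → ¬ G.Adj (c 0) (u (r - i)))
    (hs : s < m) (hcs : G.Adj (c 0) (u s)) (hsr : r + 2 ≤ s ∨ s + n + 1 ≤ r) :
    HasInducedCopyG (F1G n) G :=
  hasInducedCopyG_F1G_of_spider (x := c 0) (q := u s) (y := fun i => c (1 + i))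
    (z := fun i => u (r - i)) (hc.1.comp_add (by omega)) (hu.comp_sub hr hnr)
    (fun i _ j _ => ⟨hc.2.1 _ (by omega) _ (by omega),
      hc.2.2 _ (by omega) (by omega) _ (by omega)⟩) hcs
    (fun i _ => ⟨hc.1.ne (by omega) (by omega) (by omega),
      by rw [hc.1.2 _ (by omega) _ (by omega)]; omega⟩)
    (fun i _ => ⟨hc.2.1 _ (by omega) _ (by omega), fun h => by_contra fun hi =>
      hleg i (by omega) (by omega) h, by rintro rfl; simpa using hcr⟩)
    (fun i _ => ⟨(hc.2.1 _ (by omega) _ (by omega)).symm,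
      fun h => hc.2.2 _ (by omega) (by omega) _ (by omega) h.symm⟩)
    (fun i _ => ⟨hu.ne (by omega) (by omega) (by omega), hu.not_adj (by omega) (by omega)
      (by omega)⟩)

/-- Otherwise the non-neighbours of `c 0` just below `t` (or below `t - 1`) form the second
leg of the spider of `hasInducedCopyG_F1G`, with pendant `u a` or `u b`. -/
theorem exists_adj_gap (hc : IsPendantPath G m u N c) (hu : IsInducedPathSeq G m u)
    (hF1 : ¬ HasInducedCopyG (F1G n) G) (hN : n < N) {a b : ℕ} (ha : a < m)
    (hca : G.Adj (c 0) (u a)) (hb : b < m) (hcb : G.Adj (c 0) (u b))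
    (hab : ∀ t < m, G.Adj (c 0) (u t) → a ≤ t ∧ t ≤ b) (habn : a + n + 2 ≤ b) {t : ℕ}
    (ht : t < m) (hct : G.Adj (c 0) (u t)) (hat : a + 2 ≤ t) :
    ∃ s < m, G.Adj (c 0) (u s) ∧ s + 2 ≤ t ∧ t ≤ s + n := by
  by_contra! hgap
  have han := hgap a ha hca hat
  by_cases hct' : G.Adj (c 0) (u (t - 1))
  · have hleg : ∀ i < n, 0 < i → ¬ G.Adj (c 0) (u (t - 1 - i)) := fun i _ _ h => by
      have := hgap _ (by omega) h (by omega)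
      omega
    rcases (hab t ht hct).2.lt_or_eq with htb | rfl
    · exact hF1 (hc.hasInducedCopyG_F1G hu hN (by omega) (by omega) hct' hleg hb hcb
        (by omega))
    · exact hF1 (hc.hasInducedCopyG_F1G hu hN (by omega) (by omega) hct' hleg ha hca
        (by omega))
  · have hleg : ∀ i < n, 0 < i → ¬ G.Adj (c 0) (u (t - i)) := fun i _ hi h => by
      rcases Nat.eq_or_lt_of_le (Nat.succ_le_of_lt hi) with rfl | hi
      · exact hct' h
      · have := hgap _ (by omega) h (by omega)
        omega
    exact hF1 (hc.hasInducedCopyG_F1G hu hN ht (by omega) hct hleg ha hca (by omega))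

theorem not_adj_of_isLongest (hc : IsPendantPath G m u N c) (hu : IsInducedPathSeq G m u)
    (hlong : ∀ k w, IsInducedPathSeq G k w → k ≤ m) (hSt : ¬ HasInducedCopyG (StarG n) G)
    (hF1 : ¬ HasInducedCopyG (F1G n) G) (hF2 : ¬ HasInducedCopyG (F2G n) G) (hn : 0 < n)
    (hN : 2 * n ≤ N) (hN' : n * (n - 2) ≤ N) : ∀ t < m, ¬ G.Adj (c 0) (u t) := by
  intro t₀ ht₀ hct₀
  obtain ⟨a, ha, hca, b, hb, hcb, hab⟩ := exists_extreme_adj ⟨t₀, ht₀, hct₀⟩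
  have hNb : N ≤ b := hc.le_of_isLongest hu hlong hb hcb fun t ht h => (hab t ht h).2
  have hNa : N ≤ m - 1 - a := hc.reverse.le_of_isLongest
    (hu.comp_sub (a := m - 1) (l := m) (by omega) (by omega)) hlong (by omega)
    (by simpa [show m - 1 - (m - 1 - a) = a by omega] using hca)
    fun t ht h => by have := (hab _ (by omega) h).1; omega
  have hc1 : ∀ t < m, c 1 ≠ u t ∧ ¬ G.Adj (c 1) (u t) := fun t ht =>
    ⟨hc.2.1 1 (by omega) t ht, hc.2.2 1 (by omega) (by omega) t ht⟩
  have hc01 : G.Adj (c 0) (c 1) := (hc.1.2 0 (by omega) 1 (by omega)).2 (Or.inl rfl)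
  rcases le_or_gt b (a + 1) with hba | hab2
  · obtain ⟨s, hs, hcs, hsend⟩ := exists_adj_near_end hF1 hF2 hu (hc.2.1 0 (by omega)) hc1
      hc01 ht₀ hct₀
    have := hab s hs hcs
    omega
  have ha2 : a + 2 ≤ n := by
    by_contra
    exact hF1 (hc.hasInducedCopyG_F1G hu (by omega) ha (by omega) hca
      (fun i _ _ h => by have := (hab _ (by omega) h).1; omega) hb hcb (by omega))
  obtain ⟨S, hSA, -, hsep, hcard⟩ := exists_separated_subset_of_gaps
    (A := {t | t < m ∧ G.Adj (c 0) (u t)}) (a := a) (n := n)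
    (fun t ⟨ht, hct⟩ hat => by
      obtain ⟨s, hs, hcs, hst⟩ := hc.exists_adj_gap hu hF1 (by omega) ha hca hb hcb hab
        (by omega) ht hct hat
      exact ⟨s, ⟨hs, hcs⟩, hst⟩) b ⟨hb, hcb⟩
  refine hSt (hasInducedCopyG_starG_of_separated hu hn (fun s hs => hSA hs) hsep hc1 hc01 ?_)
  by_contra hsmall
  have : n * S.card ≤ n * (n - 2) := Nat.mul_le_mul_left n (by omega)
  omega

end IsPendantPath

end LongestInducedPath

theorem SimpleGraph.Connected.eq_univ_of_adj_closed {V : Type} {G : SimpleGraph V}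
    (hG : G.Connected) {S : Set V} (hS : S.Nonempty) (hcl : ∀ v ∈ S, ∀ w, G.Adj v w → w ∈ S) :
    S = Set.univ := by
  obtain ⟨x, hx⟩ := hS
  refine Set.eq_univ_of_forall fun y => ?_
  obtain ⟨p⟩ := hG.preconnected x y
  induction p with
  | nil => exact hx
  | cons h _ ih => exact ih (hcl _ hx _ h)

section Layers

variable {V : Type} {G : SimpleGraph V}

def IsLayering (G : SimpleGraph V) (P Y : Set V) (X : ℕ → Set V) : Prop :=
  ∀ i, X (i + 2) = nbhd G (X (i + 1)) \ (P ∪ Y ∪ ⋃ j ∈ Finset.Icc 1 i, X j)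

namespace IsLayering

variable {P Y : Set V} {X : ℕ → Set V}

theorem mem_iff (hX : IsLayering G P Y X) {i : ℕ} (hi : 1 ≤ i) {w : V} :
    w ∈ X (i + 1) ↔ w ∈ nbhd G (X i) ∧ w ∉ P ∧ w ∉ Y ∧ ∀ j, 1 ≤ j → j < i → w ∉ X j := by
  obtain ⟨k, rfl⟩ : ∃ k, i = k + 1 := ⟨i - 1, by omega⟩
  rw [hX k]
  simp only [Set.mem_sdiff, Set.mem_union, Set.mem_iUnion, Finset.mem_Icc, not_or, not_exists]
  exact and_congr_right fun _ => and_assoc.trans (and_congr_right fun _ => and_congr_right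
    fun _ => forall_congr' fun j => ⟨fun h hj hjk => h ⟨hj, by omega⟩,
      fun h hj => h hj.1 (by omega)⟩)

theorem disjoint_of_lt (hX : IsLayering G P Y X) {i j : ℕ} (hi : 1 ≤ i) (hij : i < j) :
    Disjoint (X i) (X j) := by
  obtain ⟨k, rfl⟩ : ∃ k, j = k + 1 := ⟨j - 1, by omega⟩
  refine Set.disjoint_right.2 fun w hw hwi => ?_
  obtain ⟨hnb, -, -, hlow⟩ := (hX.mem_iff (by omega)).1 hw
  rcases Nat.lt_or_ge i k with h | h
  · exact hlow i hi h hwi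
  · exact hnb.1 (by rwa [show i = k by omega] at hwi)

theorem disjoint_of_ne (hX : IsLayering G P Y X) {i j : ℕ} (hi : 1 ≤ i) (hj : 1 ≤ j)
    (hij : i ≠ j) : Disjoint (X i) (X j) :=
  (Nat.lt_or_gt_of_ne hij).elim (hX.disjoint_of_lt hi) fun h => (hX.disjoint_of_lt hj h).symm

theorem disjoint_union (hX : IsLayering G P Y X) (h1 : Disjoint (X 1) (P ∪ Y)) {i : ℕ}
    (hi : 1 ≤ i) : Disjoint (X i) (P ∪ Y) := by
  obtain ⟨k, rfl⟩ : ∃ k, i = k + 1 := ⟨i - 1, by omega⟩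
  rcases Nat.eq_zero_or_pos k with rfl | hk
  · exact h1
  refine Set.disjoint_left.2 fun w hw hPY => ?_
  obtain ⟨-, hP, hY, -⟩ := (hX.mem_iff hk).1 hw
  exact hPY.elim hP hY

theorem mem_succ (hX : IsLayering G P Y X) {i : ℕ} (hi : 1 ≤ i) {v w : V} (hv : v ∈ X i)
    (hvw : G.Adj v w) (hP : w ∉ P) (hY : w ∉ Y) (hlow : ∀ j, 1 ≤ j → j ≤ i → w ∉ X j) :
    w ∈ X (i + 1) :=
  (hX.mem_iff hi).2 ⟨⟨hlow i hi le_rfl, v, hv, hvw.symm⟩, hP, hY,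
    fun j hj hji => hlow j hj hji.le⟩

theorem not_adj (hX : IsLayering G P Y X) {i j : ℕ} (hi : 1 ≤ i) (hij : i + 2 ≤ j) {v w : V}
    (hv : v ∈ X i) (hw : w ∈ X j) : ¬ G.Adj v w := by
  obtain ⟨k, rfl⟩ : ∃ k, j = k + 1 := ⟨j - 1, by omega⟩
  obtain ⟨-, hP, hY, -⟩ := (hX.mem_iff (by omega)).1 hw
  intro hvw
  have hw' := hX.mem_succ hi hv hvw hP hY fun l hl hli hwl =>
    Set.disjoint_left.1 (hX.disjoint_of_lt hl (by omega)) hwl hw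
  exact Set.disjoint_left.1 (hX.disjoint_of_lt (by omega) (by omega)) hw' hw

theorem eq_empty_of_le (hX : IsLayering G P Y X) {k : ℕ} (hk : 1 ≤ k) (hXk : X k = ∅) :
    ∀ i, k ≤ i → X i = ∅ := by
  intro i hki
  induction i, hki using Nat.le_induction with
  | base => exact hXk
  | succ i hki ih =>
    refine Set.eq_empty_of_forall_notMem fun w hw => ?_
    obtain ⟨⟨-, v, hv, -⟩, -⟩ := (hX.mem_iff (by omega)).1 hw
    simp [ih] at hv

theorem union_eq_univ (hX : IsLayering G P Y X) (hG : G.Connected) (hP : P.Nonempty)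
    (hcl : ∀ v ∈ P ∪ Y, ∀ w, G.Adj v w → w ∈ P ∪ Y ∪ X 1) {N : ℕ} (hN : X (N + 1) = ∅) :
    P ∪ Y ∪ ⋃ i ∈ Finset.Icc 1 N, X i = Set.univ := by
  have hlayer : ∀ j, 1 ≤ j → j ≤ N + 1 → ∀ w ∈ X j, w ∈ P ∪ Y ∪ ⋃ i ∈ Finset.Icc 1 N, X i := by
    intro j hj hjN w hw
    rcases Nat.lt_or_ge j (N + 1) with h | h
    · exact Or.inr (Set.mem_biUnion (Finset.mem_Icc.2 ⟨hj, by omega⟩) hw)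
    · rw [show j = N + 1 by omega, hN] at hw
      exact hw.elim
  refine hG.eq_univ_of_adj_closed (hP.mono (Set.subset_union_left.trans Set.subset_union_left))
    fun v hv w hvw => ?_
  rcases hv with hv | hv
  · exact (hcl v hv w hvw).elim Or.inl (hlayer 1 le_rfl (by omega) w)
  obtain ⟨i, hi, hv⟩ := Set.mem_iUnion₂.1 hv
  rw [Finset.mem_Icc] at hi
  by_cases hwPY : w ∈ P ∪ Y
  · exact Or.inl hwPY
  by_cases hlow : ∃ j, 1 ≤ j ∧ j ≤ i ∧ w ∈ X j
  · obtain ⟨j, hj, hji, hw⟩ := hlow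
    exact hlayer j hj (by omega) w hw
  push Not at hlow
  exact hlayer (i + 1) (by omega) (by omega) w (hX.mem_succ hi.1 hv hvw
    (fun h => hwPY (Or.inl h)) (fun h => hwPY (Or.inr h)) hlow)

theorem exists_isInducedPathSeq (hX : IsLayering G P Y X) {k : ℕ} {v : V}
    (hv : v ∈ X (k + 1)) :
    ∃ c : ℕ → V, IsInducedPathSeq G (k + 1) c ∧ ∀ i ≤ k, c i ∈ X (i + 1) := by
  suffices ∃ c : ℕ → V, c k = v ∧ (∀ i ≤ k, c i ∈ X (i + 1)) ∧
      ∀ i < k, G.Adj (c i) (c (i + 1)) by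
    obtain ⟨c, -, hcX, hadj⟩ := this
    refine ⟨c, ⟨fun i hi j hj h => ?_, fun i hi j hj => ⟨fun h => ?_, ?_⟩⟩, hcX⟩
    · by_contra hij
      exact Set.disjoint_left.1 (hX.disjoint_of_ne (by omega) (by omega) (by omega : i + 1 ≠ j + 1))
        (hcX i (by omega)) (h ▸ hcX j (by omega))
    · by_contra hij
      rcases lt_trichotomy i j with hij' | rfl | hij'
      · exact hX.not_adj (by omega) (by omega) (hcX i (by omega)) (hcX j (by omega)) h
      · exact G.irrefl h
      · exact hX.not_adj (by omega) (by omega) (hcX j (by omega)) (hcX i (by omega)) h.symm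
    · rintro (rfl | rfl)
      exacts [hadj i (by omega), (hadj j (by omega)).symm]
  induction k generalizing v with
  | zero => exact ⟨fun _ => v, rfl, fun i hi => by simpa [show i = 0 by omega] using hv, by simp⟩
  | succ k ih =>
    obtain ⟨⟨-, x, hx, hxv⟩, -⟩ := (hX.mem_iff (by omega)).1 hv
    obtain ⟨c, hck, hcX, hadj⟩ := ih hx
    refine ⟨fun i => if i = k + 1 then v else c i, by simp, fun i hi => ?_, fun i hi => ?_⟩
    · by_cases h : i = k + 1
      · simpa [h] using hv
      · simpa [h] using hcX i (by omega)
    · by_cases h : i = k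
      · simpa [h, hck] using hxv.symm
      · simpa [show i ≠ k + 1 by omega, h] using hadj i (by omega)

end IsLayering

end Layers

section LayersAroundPath

variable {V : Type} {G : SimpleGraph V} {P X₀ Y X₁ : Set V}

theorem disjoint_of_eq_nbhd_sdiff (hY : Y = nbhd G (P \ X₀) \ (X₀ ∪ nbhd G X₀)) :
    Disjoint P Y := by
  subst hY
  exact Set.disjoint_right.2 fun y ⟨⟨hy, _⟩, hy'⟩ hyP =>
    hy' (Or.inl (by_contra fun h => hy ⟨hyP, h⟩))

theorem disjoint_union_of_eq_nbhd_sdiff (hY : Y = nbhd G (P \ X₀) \ (X₀ ∪ nbhd G X₀))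
    (hX₁ : X₁ = nbhd G X₀ \ P) : Disjoint X₁ (P ∪ Y) := by
  subst hY hX₁
  exact Set.disjoint_left.2 fun w ⟨hw, hwP⟩ h => h.elim hwP fun hwY => hwY.2 (Or.inr hw)

theorem mem_of_adj_of_mem (hX₀ : X₀ ⊆ P) (hY : Y = nbhd G (P \ X₀) \ (X₀ ∪ nbhd G X₀))
    (hX₁ : X₁ = nbhd G X₀ \ P) {v w : V} (hv : v ∈ P) (hvw : G.Adj v w) : w ∈ P ∪ Y ∪ X₁ := by
  subst hY hX₁
  by_cases hwP : w ∈ P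
  · exact Or.inl (Or.inl hwP)
  by_cases hw₀ : w ∈ nbhd G X₀
  · exact Or.inr ⟨hw₀, hwP⟩
  have hv₀ : v ∉ X₀ := fun hv₀ => hw₀ ⟨fun h => hwP (hX₀ h), v, hv₀, hvw.symm⟩
  exact Or.inl (Or.inr ⟨⟨fun h => hwP h.1, v, ⟨hv, hv₀⟩, hvw.symm⟩,
    fun h => h.elim (fun h => hwP (hX₀ h)) hw₀⟩)

variable {n m : ℕ} {U : ℕ → V}

theorem mem_of_adj_of_mem_union (hF1 : ¬ HasInducedCopyG (F1G n) G)
    (hF2 : ¬ HasInducedCopyG (F2G n) G) (hU : IsInducedPathSeq G m U)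
    (hX₀ : X₀ ⊆ U '' Set.Iio m) (hend : ∀ s < m, s < n ∨ m ≤ s + n → U s ∈ X₀)
    (hY : Y = nbhd G (U '' Set.Iio m \ X₀) \ (X₀ ∪ nbhd G X₀))
    (hX₁ : X₁ = nbhd G X₀ \ U '' Set.Iio m) {v w : V} (hv : v ∈ U '' Set.Iio m ∪ Y)
    (hvw : G.Adj v w) : w ∈ U '' Set.Iio m ∪ Y ∪ X₁ := by
  rcases hv with hv | hy
  · exact mem_of_adj_of_mem hX₀ hY hX₁ hv hvw
  by_contra hw
  have hvP : v ∉ U '' Set.Iio m := Set.disjoint_right.1 (disjoint_of_eq_nbhd_sdiff hY) hy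
  have hy' := hy
  rw [hY] at hy'
  obtain ⟨⟨-, _, ⟨⟨t, ht, rfl⟩, -⟩, hvt⟩, hvX⟩ := hy'
  obtain ⟨s, hs, hvs, hsend⟩ := exists_adj_near_end hF1 hF2 hU (v := v) (q := w)
    (fun t ht h => hvP ⟨t, ht, h.symm⟩)
    (fun t ht => ⟨fun h => hw (Or.inl (Or.inl ⟨t, ht, h.symm⟩)),
      fun h => hw (mem_of_adj_of_mem hX₀ hY hX₁ ⟨t, ht, rfl⟩ h.symm)⟩) hvw ht hvt
  exact hvX (Or.inr ⟨fun h => hvP (hX₀ h), U s, hend s hs hsend, hvs⟩)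

theorem IsLayering.isPendantPath {X : ℕ → Set V} (hX : IsLayering G (U '' Set.Iio m) Y X)
    (hX₀ : X₀ ⊆ U '' Set.Iio m) (hY : Y = nbhd G (U '' Set.Iio m \ X₀) \ (X₀ ∪ nbhd G X₀))
    (hX₁ : X 1 = nbhd G X₀ \ U '' Set.Iio m) {N : ℕ} {c : ℕ → V}
    (hc : IsInducedPathSeq G N c) (hcX : ∀ i < N, c i ∈ X (i + 1)) :
    IsPendantPath G m U N c := by
  have h1 := disjoint_union_of_eq_nbhd_sdiff hY hX₁
  refine ⟨hc, fun i hi t ht h => Set.disjoint_left.1 (hX.disjoint_union h1 (by omega))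
    (hcX i hi) (Or.inl ⟨t, ht, h.symm⟩), fun i hi hi0 t ht h => ?_⟩
  rcases mem_of_adj_of_mem hX₀ hY hX₁ ⟨t, ht, rfl⟩ h.symm with hPY | hX1
  · exact Set.disjoint_left.1 (hX.disjoint_union h1 (by omega)) (hcX i hi) hPY
  · exact Set.disjoint_left.1 (hX.disjoint_of_lt le_rfl (by omega)) hX1 (hcX i hi)

theorem IsLayering.eq_empty_of_isLongest {X : ℕ → Set V} (hSt : ¬ HasInducedCopyG (StarG n) G)
    (hF1 : ¬ HasInducedCopyG (F1G n) G) (hF2 : ¬ HasInducedCopyG (F2G n) G) (hn : 0 < n)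
    (hU : IsInducedPathSeq G m U) (hlong : ∀ k w, IsInducedPathSeq G k w → k ≤ m)
    (hX : IsLayering G (U '' Set.Iio m) Y X) (hX₀ : X₀ ⊆ U '' Set.Iio m)
    (hY : Y = nbhd G (U '' Set.Iio m \ X₀) \ (X₀ ∪ nbhd G X₀))
    (hX₁ : X 1 = nbhd G X₀ \ U '' Set.Iio m) {N : ℕ} (hN : 2 * n ≤ N)
    (hN' : n * (n - 2) ≤ N) : X N = ∅ := by
  obtain ⟨k, rfl⟩ : ∃ k, N = k + 1 := ⟨N - 1, by omega⟩
  refine Set.eq_empty_of_forall_notMem fun v hv => ?_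
  obtain ⟨c, hc, hcX⟩ := hX.exists_isInducedPathSeq hv
  have hc0 := hcX 0 (Nat.zero_le k)
  rw [hX₁] at hc0
  obtain ⟨⟨-, _, hx, hcx⟩, -⟩ := hc0
  obtain ⟨t, ht, rfl⟩ := hX₀ hx
  exact (hX.isPendantPath hX₀ hY hX₁ hc fun i hi => hcX i (by omega)).not_adj_of_isLongest hU
    hlong hSt hF1 hF2 hn hN hN' t ht hcx

end LayersAroundPath

theorem partition_around_longest_induced_path_general (n : ℕ) (hn : 3 ≤ n)
    (V : Type) (G : SimpleGraph V) (hconn : G.Connected)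
    (hSt : ¬ HasInducedCopyG (StarG n) G)
    (hF1 : ¬ HasInducedCopyG (F1G n) G)
    (hF2 : ¬ HasInducedCopyG (F2G n) G)
    (n₀ : ℕ) (hn₀ : n₀ = max ((n ^ 2 - n - 1) / 2) n)
    (m : ℕ) (u : Fin m → V) (hu : IsInducedPathEmb G u)
    (hlong : ∀ (m' : ℕ) (u' : Fin m' → V), IsInducedPathEmb G u' → m' ≤ m)
    (X : ℕ → Set V) (Y : Set V)
    (hX0 : X 0 = {x | ∃ i : Fin m, x = u i ∧ (i.val < n₀ ∨ m ≤ i.val + n₀)})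
    (hY : Y = nbhd G (Set.range u \ X 0) \ (X 0 ∪ nbhd G (X 0)))
    (hX1 : X 1 = nbhd G (X 0) \ Set.range u)
    (hXs : ∀ i : ℕ, X (i + 2) =
      nbhd G (X (i + 1)) \ (Set.range u ∪ Y ∪ ⋃ j ∈ Finset.Icc 1 i, X j)) :
    (Set.range u ∪ Y ∪ ⋃ i ∈ Finset.Icc 1 (2 * n₀ - 1), X i) = Set.univ ∧
    Disjoint (Set.range u) Y ∧
    (∀ i ∈ Finset.Icc 1 (2 * n₀ - 1), Disjoint (Set.range u) (X i)) ∧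
    (∀ i ∈ Finset.Icc 1 (2 * n₀ - 1), Disjoint Y (X i)) ∧
    (∀ i ∈ Finset.Icc 1 (2 * n₀ - 1), ∀ j ∈ Finset.Icc 1 (2 * n₀ - 1), i ≠ j →
      Disjoint (X i) (X j)) ∧
    (∀ i : ℕ, 2 * n₀ ≤ i → X i = ∅) := by
  have := hconn.nonempty
  obtain ⟨U, hU, rfl⟩ := hu.exists_isInducedPathSeq
  have hlong' : ∀ k w, IsInducedPathSeq G k w → k ≤ m :=
    fun k w hw => hlong k _ (isInducedPathEmb_iff.2 hw)
  rw [range_fin_eq_image_Iio] at hY hX1 hXs ⊢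
  replace hXs : IsLayering G (U '' Set.Iio m) Y X := hXs
  have hn₀' : n ≤ n₀ ∧ (n ^ 2 - n - 1) / 2 ≤ n₀ := hn₀ ▸ ⟨le_max_right _ _, le_max_left _ _⟩
  have hX₀ : X 0 ⊆ U '' Set.Iio m := hX0 ▸ fun x ⟨i, hx, _⟩ => ⟨i, i.2, hx.symm⟩
  have hend : ∀ s < m, s < n ∨ m ≤ s + n → U s ∈ X 0 :=
    fun s hs h => hX0 ▸ ⟨⟨s, hs⟩, rfl, show s < n₀ ∨ m ≤ s + n₀ by omega⟩
  have hempty := hXs.eq_empty_of_le (by omega) (hXs.eq_empty_of_isLongest hSt hF1 hF2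
    (by omega) hU hlong' hX₀ hY hX1 (N := 2 * n₀) (by omega) ((mul_sub_two_le n).trans (by omega)))
  have h1 := disjoint_union_of_eq_nbhd_sdiff hY hX1
  refine ⟨hXs.union_eq_univ hconn ⟨U 0, 0, hlong' 1 _ (isInducedPathSeq_one (U 0)), rfl⟩
      (fun v hv w => mem_of_adj_of_mem_union hF1 hF2 hU hX₀ hend hY hX1 hv)
      (hempty _ (by omega)), disjoint_of_eq_nbhd_sdiff hY, fun i hi => ?_, fun i hi => ?_,
    fun i hi j hj => hXs.disjoint_of_ne (Finset.mem_Icc.1 hi).1 (Finset.mem_Icc.1 hj).1, hempty⟩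
  · exact ((hXs.disjoint_union h1 (Finset.mem_Icc.1 hi).1).mono_right Set.subset_union_left).symm
  · exact ((hXs.disjoint_union h1 (Finset.mem_Icc.1 hi).1).mono_right Set.subset_union_right).symm

/-- Chiba–Furuya, Lemma 2.6. With `P = u₁⋯u_m` a longest induced
path of a connected `{K*_n, K_{1,n}, F^(1)_n, F^(2)_n}`-free graph `G` (`n ≥ 3`),
`n₀ = max{⌈(n²−n−2)/2⌉, n}` and the sets `X₀, Y, X₁, X₂, …` defined as in the paper,
`V(G)` is the disjoint union of `V(P)`, `Y`, and `X₁, …, X_{2n₀−1}`; in particular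
`X_i = ∅` for `i ≥ 2n₀`.  (Indices of `P` are 0-based.) -/
theorem partition_around_longest_induced_path (n : ℕ) (hn : 3 ≤ n)
    (V : Type) [Fintype V] (G : SimpleGraph V) (hconn : G.Connected)
    (hKs : ¬ HasInducedCopyG (KStarG n) G)
    (hSt : ¬ HasInducedCopyG (StarG n) G)
    (hF1 : ¬ HasInducedCopyG (F1G n) G)
    (hF2 : ¬ HasInducedCopyG (F2G n) G)
    (n₀ : ℕ) (hn₀ : n₀ = max ((n ^ 2 - n - 1) / 2) n)
    (m : ℕ) (u : Fin m → V) (hu : IsInducedPathEmb G u)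
    (hlong : ∀ (m' : ℕ) (u' : Fin m' → V), IsInducedPathEmb G u' → m' ≤ m)
    (X : ℕ → Set V) (Y : Set V)
    (hX0 : X 0 = {x | ∃ i : Fin m, x = u i ∧ (i.val < n₀ ∨ m ≤ i.val + n₀)})
    (hY : Y = nbhd G (Set.range u \ X 0) \ (X 0 ∪ nbhd G (X 0)))
    (hX1 : X 1 = nbhd G (X 0) \ Set.range u)
    (hXs : ∀ i : ℕ, X (i + 2) =
      nbhd G (X (i + 1)) \ (Set.range u ∪ Y ∪ ⋃ j ∈ Finset.Icc 1 i, X j)) :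
    (Set.range u ∪ Y ∪ ⋃ i ∈ Finset.Icc 1 (2 * n₀ - 1), X i) = Set.univ ∧
    Disjoint (Set.range u) Y ∧
    (∀ i ∈ Finset.Icc 1 (2 * n₀ - 1), Disjoint (Set.range u) (X i)) ∧
    (∀ i ∈ Finset.Icc 1 (2 * n₀ - 1), Disjoint Y (X i)) ∧
    (∀ i ∈ Finset.Icc 1 (2 * n₀ - 1), ∀ j ∈ Finset.Icc 1 (2 * n₀ - 1), i ≠ j →
      Disjoint (X i) (X j)) ∧
    (∀ i : ℕ, 2 * n₀ ≤ i → X i = ∅) :=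
  partition_around_longest_induced_path_general n hn V G hconn hSt hF1 hF2 n₀ hn₀ m u hu hlong X Y
    hX0 hY hX1 hXs
end

section
/- Let n ≥ 3, let G be a connected {K*_n, K_{1,n}, F^(1)_n, F^(2)_n}-free graph, let n₀ = max{⌈(n²−n−2)/2⌉, n}, let P = u_1 u_2 ⋯ u_m be a longest induced path of G, and define X₀ = {u_i : 1 ≤ i ≤ n₀ or m−n₀+1 ≤ i ≤ m}, Y = N_G(V(P) \ X₀) \ (X₀ ∪ N_G(X₀)), X₁ = N_G(X₀) \ V(P), and for i ≥ 2, X_i = N_G(X_{i−1}) \ (V(P) ∪ Y ∪ ⋃_{1 ≤ j ≤ i−2} X_j). Define α₀ = 2⌈n₀/2⌉ and α_i = (n−1)·R(n, α_{i−1}+1) − 1 for i ≥ 1, where R denotes the Ramsey number. Then for every integer i ≥ 0, the independence number of the subgraph of G induced by X_i satisfies α(G[X_i]) ≤ α_i. -/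
/-! The layers are controlled one at a time.  An independent set of `G[X₀]` is an independent
set of two subpaths of `P` with `n₀` vertices each, so it has at most `2⌈n₀/2⌉` vertices.  If
`S` is an independent set in the next layer, choose a minimal `T ⊆ X_{i-1}` dominating `S`:
every `t ∈ T` then has a private neighbour in `S`.  As `G` is `K_{1,n}`-free, each `t` has at
most `n - 1` neighbours in `S`, so `|T| ≥ |S| / (n - 1)`.  If `|T| ≥ R(n, α_{i-1} + 1)`, then
`T` holds either an independent set too large for `X_{i-1}`, or an `n`-clique which, with its
private neighbours, spans an induced `K*_n`. -/

open Finset SimpleGraph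

theorem exists_ramsey_bound (a b : ℕ) : ∃ R : ℕ, ∀ {V : Type*} (G : SimpleGraph V) (W : Finset V),
    R ≤ #W → (∃ s ⊆ W, G.IsNClique a s) ∨ ∃ s ⊆ W, Gᶜ.IsNClique b s := by
  classical
  induction a generalizing b with
  | zero => exact ⟨0, fun G W _ => .inl ⟨∅, empty_subset W, by simp⟩⟩
  | succ a iha =>
    induction b with
    | zero => exact ⟨0, fun G W _ => .inr ⟨∅, empty_subset W, by simp⟩⟩
    | succ b ihb =>
      obtain ⟨R₁, hR₁⟩ := iha (b + 1)
      obtain ⟨R₂, hR₂⟩ := ihb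
      refine ⟨R₁ + R₂ + 1, fun {V} G W hW => ?_⟩
      obtain ⟨v, hv⟩ : W.Nonempty := card_pos.mp (by omega)
      have extend : ∀ (H : SimpleGraph V) (k : ℕ) (s : Finset V), s ⊆ W →
          (∀ w ∈ s, H.Adj v w) → H.IsNClique k s →
          insert v s ⊆ W ∧ H.IsNClique (k + 1) (insert v s) := fun H k s hsW hadj hk =>
        ⟨insert_subset hv hsW, hk.insert hadj⟩
      have hcompl : {w ∈ W.erase v | Gᶜ.Adj v w} = {w ∈ W.erase v | ¬ G.Adj v w} :=
        filter_congr fun w hw => by simp [compl_adj, (ne_of_mem_erase hw).symm]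
      have hsplit : #{w ∈ W.erase v | G.Adj v w} + #{w ∈ W.erase v | Gᶜ.Adj v w} = #W - 1 := by
        rw [hcompl, card_filter_add_card_filter_not, card_erase_of_mem hv]
      have hsub : ∀ {p : V → Prop} [DecidablePred p], {w ∈ W.erase v | p w} ⊆ W :=
        fun {_} [_] => (filter_subset _ _).trans (erase_subset v W)
      by_cases h : R₁ ≤ #{w ∈ W.erase v | G.Adj v w}
      · rcases hR₁ G _ h with ⟨s, hs, hcl⟩ | ⟨s, hs, hcl⟩
        · exact .inl ⟨insert v s,
            extend G a s (hs.trans hsub) (fun w hw => (mem_filter.mp (hs hw)).2) hcl⟩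
        · exact .inr ⟨s, hs.trans hsub, hcl⟩
      · rcases hR₂ G {w ∈ W.erase v | Gᶜ.Adj v w} (by omega) with ⟨s, hs, hcl⟩ | ⟨s, hs, hcl⟩
        · exact .inl ⟨s, hs.trans hsub, hcl⟩
        · exact .inr ⟨insert v s,
            extend Gᶜ b s (hs.trans hsub) (fun w hw => (mem_filter.mp (hs hw)).2) hcl⟩

theorem ramseyNumber_spec {V : Type*} (G : SimpleGraph V) (a b : ℕ) (W : Finset V)
    (hW : ramseyNumber a b ≤ #W) :
    (∃ s ⊆ W, G.IsNClique a s) ∨ ∃ s ⊆ W, G.IsNIndepSet b s := by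
  classical
  obtain ⟨R, hR⟩ := exists_ramsey_bound a b
  have hfin : ∀ m, ramseyNumber a b ≤ m → ∀ H : SimpleGraph (Fin m),
      (∃ s, H.IsNClique a s) ∨ ∃ s, Hᶜ.IsNClique b s := by
    refine Nat.sInf_mem (s := {R | ∀ m, R ≤ m → ∀ H : SimpleGraph (Fin m),
      (∃ s, H.IsNClique a s) ∨ ∃ s, Hᶜ.IsNClique b s}) ⟨R, fun m hm H => ?_⟩
    rcases hR H univ (by simpa using hm) with ⟨s, -, hs⟩ | ⟨s, -, hs⟩
    exacts [.inl ⟨s, hs⟩, .inr ⟨s, hs⟩]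
  let f : Fin #W ↪ V := W.equivFin.symm.toEmbedding.trans (Function.Embedding.subtype _)
  have hfW : ∀ s : Finset (Fin #W), s.map f ⊆ W := fun s x hx => by
    obtain ⟨i, -, rfl⟩ := mem_map.mp hx
    exact (W.equivFin.symm i).2
  rcases hfin _ hW (G.comap f) with ⟨s, hs⟩ | ⟨s, hs⟩
  · exact .inl ⟨s.map f, hfW s, hs.map.mono (map_comap_le f G)⟩
  · refine .inr ⟨s.map f, hfW s, ?_⟩
    have hle : (G.comap f)ᶜ ≤ Gᶜ.comap f := fun i j hij =>
      ⟨f.injective.ne (compl_adj _ _ _ |>.mp hij).1, (compl_adj _ _ _ |>.mp hij).2⟩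
    rw [← isNClique_compl]
    exact (hs.mono hle).map.mono (map_comap_le f Gᶜ)

theorem indepNumOn_le_of_forall {V : Type} {G : SimpleGraph V} {X : Set V} {k : ℕ}
    (h : ∀ s : Finset V, ↑s ⊆ X → G.IsIndepSet s → #s ≤ k) : indepNumOn G X ≤ k :=
  csSup_le ⟨0, ∅, by simp⟩ fun _ ⟨s, hsX, hs, hind⟩ => hs ▸ h s hsX fun a ha b hb => hind a ha b hb

section InducedCopies

variable {V : Type} {G : SimpleGraph V} {n : ℕ}

theorem SimpleGraph.IsIndepSet.card_filter_adj_lt [DecidableRel G.Adj]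
    (hSt : ¬ HasInducedCopyG (StarG n) G) {S : Finset V} (hS : G.IsIndepSet S) (t : V) :
    #{v ∈ S | G.Adj t v} < n := by
  by_contra! h
  obtain ⟨L, hLsub, hLcard⟩ := exists_subset_card_eq h
  let e : Fin n ≃ L := (L.equivFinOfCardEq hLcard).symm
  have hL : ∀ i, (e i : V) ∈ S ∧ G.Adj t (e i) := fun i => mem_filter.mp (hLsub (e i).2)
  have he : Function.Injective fun i => (e i : V) := Subtype.val_injective.comp e.injective
  refine hSt ⟨Sum.elim (fun _ => t) (fun i => e i), ?_, ?_⟩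
  · rintro (_ | i) (_ | j) h
    · rfl
    · exact absurd h (hL j).2.ne
    · exact absurd h.symm (hL i).2.ne
    · exact congrArg Sum.inr (he h)
  · rintro (_ | i) (_ | j)
    · simp [StarG]
    · simp [StarG, (hL j).2]
    · simp [StarG, (hL i).2.symm]
    · simp only [StarG, fromRel_adj, Sum.elim_inr, or_self, and_false, iff_false]
      exact fun hij => hS (hL i).1 (hL j).1 (G.ne_of_adj hij) hij

theorem hasInducedCopyG_kStarG_of_isNClique {C : Finset V} (hC : G.IsNClique n C) (w : V → V)
    (hw : ∀ t ∈ C, ∀ t' ∈ C, G.Adj t' (w t) ↔ t' = t) (hwC : ∀ t ∈ C, w t ∉ C)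
    (hwind : ∀ t ∈ C, ∀ t' ∈ C, ¬ G.Adj (w t) (w t')) : HasInducedCopyG (KStarG n) G := by
  let e : Fin n ≃ C := (C.equivFinOfCardEq hC.card_eq).symm
  let x : Fin n → V := fun i => e i
  have hx : ∀ i, x i ∈ C := fun i => (e i).2
  have hxinj : Function.Injective x := Subtype.val_injective.comp e.injective
  refine ⟨Sum.elim x (w ∘ x), ?_, ?_⟩
  · rintro (i | i) (j | j) h <;> simp only [Sum.elim_inl, Sum.elim_inr, Function.comp_apply] at h
    · exact congrArg Sum.inl (hxinj h)
    · exact absurd (h ▸ hx i) (hwC _ (hx j))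
    · exact absurd (h ▸ hx j) (hwC _ (hx i))
    · have hadj : G.Adj (x i) (w (x j)) := h ▸ (hw _ (hx i) _ (hx i)).2 rfl
      exact congrArg Sum.inr (hxinj ((hw _ (hx j) _ (hx i)).1 hadj))
  · rintro (i | i) (j | j)
    · simp only [Sum.elim_inl, KStarG, ne_eq, fromRel_adj, Sum.inl.injEq, eq_comm (a := j), or_self,
        and_self]
      exact ⟨fun h hij => G.ne_of_adj h (congrArg x hij),
        fun h => hC.isClique (hx i) (hx j) (hxinj.ne h)⟩
    · simp only [Sum.elim_inl, Sum.elim_inr, Function.comp_apply, KStarG, ne_eq, fromRel_adj,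
        reduceCtorEq, not_false_eq_true, or_false, true_and]
      rw [hw _ (hx j) _ (hx i), hxinj.eq_iff]
    · simp only [Sum.elim_inr, Function.comp_apply, Sum.elim_inl, KStarG, ne_eq, fromRel_adj,
        reduceCtorEq, not_false_eq_true, false_or, true_and]
      rw [G.adj_comm, hw _ (hx i) _ (hx j), hxinj.eq_iff, eq_comm]
    · simp only [KStarG, fromRel_adj, Sum.elim_inr, Function.comp_apply, or_self, and_false,
        iff_false]
      exact hwind _ (hx i) _ (hx j)

end InducedCopies

theorem SimpleGraph.exists_dominating_finset_with_private_neighbors {V : Type*}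
    (G : SimpleGraph V) {A : Set V} {S : Finset V} (hS : ∀ v ∈ S, ∃ t ∈ A, G.Adj t v) :
    ∃ T : Finset V, ↑T ⊆ A ∧ (∀ v ∈ S, ∃ t ∈ T, G.Adj t v) ∧
      ∀ t ∈ T, ∃ v ∈ S, G.Adj t v ∧ ∀ t' ∈ T, G.Adj t' v → t' = t := by
  classical
  let Dominates : Finset V → Prop := fun T => ↑T ⊆ A ∧ ∀ v ∈ S, ∃ t ∈ T, G.Adj t v
  choose f hfA hfadj using hS
  have hdom : Dominates (S.attach.image fun v : S => f v v.2) := by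
    refine ⟨?_, fun v hv => ⟨f v hv, mem_image.mpr ⟨⟨v, hv⟩, mem_attach _ _, rfl⟩, hfadj v hv⟩⟩
    intro t ht
    obtain ⟨v, -, rfl⟩ := mem_image.mp ht
    exact hfA v v.2
  obtain ⟨T, hT⟩ := exists_minimal_of_wellFoundedLT Dominates ⟨_, hdom⟩
  refine ⟨T, hT.prop.1, hT.prop.2, fun t ht => ?_⟩
  by_contra! hno
  have hdom' : Dominates (T.erase t) := by
    refine ⟨(coe_subset.mpr (erase_subset t T)).trans hT.prop.1, fun v hv => ?_⟩
    obtain ⟨t', ht', hadj⟩ := hT.prop.2 v hv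
    by_cases htt' : t' = t
    · subst htt'
      obtain ⟨t'', ht'', hadj', hne⟩ := hno v hv hadj
      exact ⟨t'', mem_erase.mpr ⟨hne, ht''⟩, hadj'⟩
    · exact ⟨t', mem_erase.mpr ⟨htt', ht'⟩, hadj⟩
  exact notMem_erase t T (hT.le_of_le hdom' (erase_subset t T) ht)

theorem card_indepSet_le_of_subset_nbhd {V : Type} {G : SimpleGraph V} {n k : ℕ} (hn : 2 ≤ n)
    (hKs : ¬ HasInducedCopyG (KStarG n) G) (hSt : ¬ HasInducedCopyG (StarG n) G)
    {A B : Set V} (hB : B ⊆ nbhd G A) (hA : ∀ s : Finset V, ↑s ⊆ A → G.IsIndepSet s → #s ≤ k)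
    {S : Finset V} (hSB : ↑S ⊆ B) (hS : G.IsIndepSet S) :
    #S ≤ (n - 1) * ramseyNumber n (k + 1) - 1 := by
  classical
  obtain ⟨T, hTA, hTdom, hTpriv⟩ := G.exists_dominating_finset_with_private_neighbors (A := A)
    fun v hv => let ⟨_, t, ht, hadj⟩ := hB (hSB hv); ⟨t, ht, hadj.symm⟩
  have hST : #S ≤ (n - 1) * #T := calc
    #S ≤ #(T.biUnion fun t => {v ∈ S | G.Adj t v}) := card_le_card fun v hv => by
          obtain ⟨t, ht, hadj⟩ := hTdom v hv
          exact mem_biUnion.mpr ⟨t, ht, mem_filter.mpr ⟨hv, hadj⟩⟩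
    _ ≤ ∑ t ∈ T, #{v ∈ S | G.Adj t v} := card_biUnion_le
    _ ≤ ∑ _t ∈ T, (n - 1) :=
          sum_le_sum fun t _ => Nat.le_sub_one_of_lt (hS.card_filter_adj_lt hSt t)
    _ = (n - 1) * #T := by rw [sum_const, smul_eq_mul, mul_comm]
  by_contra! hbig
  have hRT : ramseyNumber n (k + 1) ≤ #T :=
    Nat.le_of_mul_le_mul_left (by omega) (by omega : 0 < n - 1)
  choose! w hwS hwadj hwpriv using hTpriv
  rcases ramseyNumber_spec G n (k + 1) T hRT with ⟨C, hCT, hC⟩ | ⟨I, hIT, hI⟩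
  · refine hKs (hasInducedCopyG_kStarG_of_isNClique hC w (fun t ht t' ht' => ?_)
      (fun t ht hwt => ?_) fun t ht t' ht' hadj =>
        hS (hwS t (hCT ht)) (hwS t' (hCT ht')) (G.ne_of_adj hadj) hadj)
    · exact ⟨hwpriv t (hCT ht) t' (hCT ht'), fun h => h ▸ hwadj t (hCT ht)⟩
    · exact (hB (hSB (hwS t (hCT ht)))).1 (hTA (hCT hwt))
  · have hIA := hA I ((coe_subset.mpr hIT).trans hTA) hI.isIndepSet
    rw [hI.card_eq] at hIA
    omega

theorem card_le_of_forall_succ_notMem {I : Finset ℕ} {lo L : ℕ}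
    (hI : ∀ x ∈ I, lo ≤ x ∧ x < lo + L) (h : ∀ x ∈ I, x + 1 ∉ I) : #I ≤ (L + 1) / 2 := by
  -- `x ↦ (x - lo) / 2` is injective on `I` because no two elements of `I` are consecutive
  refine (card_le_card_of_injOn (fun x => (x - lo) / 2) (t := range ((L + 1) / 2))
    (fun x hx => ?_) fun x hx y hy hxy => ?_).trans_eq (card_range _)
  · have := hI x hx
    simp only [coe_range, Set.mem_Iio]
    omega
  · have hx' := hI x hx
    have hy' := hI y hy
    simp only at hxy
    by_contra hne
    rcases Nat.lt_or_gt_of_ne hne with hlt | hlt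
    · exact h x hx (by rwa [show x + 1 = y by omega])
    · exact h y hy (by rwa [show y + 1 = x by omega])

theorem card_le_of_forall_succ_notMem_of_near_ends {I : Finset ℕ} {m k : ℕ}
    (hI : ∀ x ∈ I, x < m ∧ (x < k ∨ m ≤ x + k)) (h : ∀ x ∈ I, x + 1 ∉ I) :
    #I ≤ 2 * ((k + 1) / 2) := by
  have hlow : #{x ∈ I | x < k} ≤ (k + 1) / 2 := by
    refine card_le_of_forall_succ_notMem (lo := 0) (fun x hx => ?_) fun x hx hx1 => ?_
    · have := (mem_filter.mp hx).2
      omega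
    · exact h x (mem_filter.mp hx).1 (mem_filter.mp hx1).1
  have hhigh : #{x ∈ I | ¬ x < k} ≤ (k + 1) / 2 := by
    refine card_le_of_forall_succ_notMem (lo := m - k) (fun x hx => ?_) fun x hx hx1 => ?_
    · obtain ⟨hxI, hxk⟩ := mem_filter.mp hx
      have := hI x hxI
      omega
    · exact h x (mem_filter.mp hx).1 (mem_filter.mp hx1).1
  have := card_filter_add_card_filter_not (s := I) (· < k)
  omega

theorem IsInducedPathEmb.card_indepSet_le {V : Type} {G : SimpleGraph V} {m k : ℕ}
    {u : Fin m → V} (hu : IsInducedPathEmb G u) {S : Finset V}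
    (hSu : ↑S ⊆ {x | ∃ i : Fin m, x = u i ∧ (i.val < k ∨ m ≤ i.val + k)})
    (hS : G.IsIndepSet S) : #S ≤ 2 * ((k + 1) / 2) := by
  classical
  let J := S.preimage u hu.1.injOn
  calc #S ≤ #(J.image u) := card_le_card fun v hv => by
          obtain ⟨i, rfl, -⟩ := hSu hv
          exact mem_image_of_mem u (mem_preimage.mpr hv)
    _ ≤ #J := card_image_le
    _ = #(J.map Fin.valEmbedding) := (card_map _).symm
    _ ≤ 2 * ((k + 1) / 2) := by
      refine card_le_of_forall_succ_notMem_of_near_ends (m := m) (fun x hx => ?_) fun x hx hx1 => ?_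
      · obtain ⟨i, hi, rfl⟩ := mem_map.mp hx
        obtain ⟨j, hij, hj⟩ := hSu (mem_preimage.mp hi)
        exact ⟨i.isLt, hu.1 hij ▸ hj⟩
      · obtain ⟨i, hi, rfl⟩ := mem_map.mp hx
        obtain ⟨j, hj, hji⟩ := mem_map.mp hx1
        have hadj : G.Adj (u i) (u j) := (hu.2 i j).mpr (.inl hji.symm)
        exact hS (mem_preimage.mp hi) (mem_preimage.mp hj) (G.ne_of_adj hadj) hadj

theorem indepNum_of_layers_bounded_general (n : ℕ) (hn : 3 ≤ n)
    (V : Type) (G : SimpleGraph V)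
    (hKs : ¬ HasInducedCopyG (KStarG n) G)
    (hSt : ¬ HasInducedCopyG (StarG n) G)
    (n₀ : ℕ)
    (m : ℕ) (u : Fin m → V) (hu : IsInducedPathEmb G u)
    (X : ℕ → Set V) (Y : Set V)
    (hX0 : X 0 = {x | ∃ i : Fin m, x = u i ∧ (i.val < n₀ ∨ m ≤ i.val + n₀)})
    (hX1 : X 1 = nbhd G (X 0) \ Set.range u)
    (hXs : ∀ i : ℕ, X (i + 2) =
      nbhd G (X (i + 1)) \ (Set.range u ∪ Y ∪ ⋃ j ∈ Finset.Icc 1 i, X j))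
    (a : ℕ → ℕ) (ha0 : a 0 = 2 * ((n₀ + 1) / 2))
    (haS : ∀ i : ℕ, a (i + 1) = (n - 1) * ramseyNumber n (a i + 1) - 1) :
    ∀ i : ℕ, indepNumOn G (X i) ≤ a i := by
  have hlayer : ∀ i, X (i + 1) ⊆ nbhd G (X i) := by
    rintro (_ | i)
    · exact hX1 ▸ Set.sdiff_subset
    · exact hXs i ▸ Set.sdiff_subset
  suffices h : ∀ i, ∀ s : Finset V, ↑s ⊆ X i → G.IsIndepSet s → #s ≤ a i from
    fun i => indepNumOn_le_of_forall (h i)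
  intro i
  induction i with
  | zero =>
    rw [hX0, ha0]
    exact fun s hs hind => hu.card_indepSet_le hs hind
  | succ i ih =>
    rw [haS]
    exact fun s hs hind => card_indepSet_le_of_subset_nbhd (by omega) hKs hSt (hlayer i) ih hs hind

/-- Chiba–Furuya, Lemma 2.7. With the setup of Lemma 2.6 and
`α₀ = 2⌈n₀/2⌉`, `α_i = (n−1)·R(n, α_{i−1}+1) − 1`, the independence number of
`G[X_i]` is at most `α_i` for every `i ≥ 0`.  (Indices of `P` are 0-based.) -/
theorem indepNum_of_layers_bounded (n : ℕ) (hn : 3 ≤ n)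
    (V : Type) [Fintype V] (G : SimpleGraph V) (hconn : G.Connected)
    (hKs : ¬ HasInducedCopyG (KStarG n) G)
    (hSt : ¬ HasInducedCopyG (StarG n) G)
    (hF1 : ¬ HasInducedCopyG (F1G n) G)
    (hF2 : ¬ HasInducedCopyG (F2G n) G)
    (n₀ : ℕ) (hn₀ : n₀ = max ((n ^ 2 - n - 1) / 2) n)
    (m : ℕ) (u : Fin m → V) (hu : IsInducedPathEmb G u)
    (hlong : ∀ (m' : ℕ) (u' : Fin m' → V), IsInducedPathEmb G u' → m' ≤ m)
    (X : ℕ → Set V) (Y : Set V)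
    (hX0 : X 0 = {x | ∃ i : Fin m, x = u i ∧ (i.val < n₀ ∨ m ≤ i.val + n₀)})
    (hY : Y = nbhd G (Set.range u \ X 0) \ (X 0 ∪ nbhd G (X 0)))
    (hX1 : X 1 = nbhd G (X 0) \ Set.range u)
    (hXs : ∀ i : ℕ, X (i + 2) =
      nbhd G (X (i + 1)) \ (Set.range u ∪ Y ∪ ⋃ j ∈ Finset.Icc 1 i, X j))
    (a : ℕ → ℕ) (ha0 : a 0 = 2 * ((n₀ + 1) / 2))
    (haS : ∀ i : ℕ, a (i + 1) = (n - 1) * ramseyNumber n (a i + 1) - 1) :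
    ∀ i : ℕ, indepNumOn G (X i) ≤ a i :=
  indepNum_of_layers_bounded_general n hn V G hKs hSt n₀ m u hu X Y hX0 hX1 hXs a ha0 haS
end
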